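/- arXiv:2008.05551 — 2 statements merged into one kernel-verified Lean document; each statement's English description precedes it below -/
import Mathlib

section
/- Let G = (ZMod 2) × (ZMod 2) and let (V, ρ) be a finite-dimensional real representation of G. Then for every g ∈ G, the determinant of the linear map ρ(g) : V → V equals the product, over all subgroups H of G of cardinality 2 with g ∉ H, of (−1)^(dim_ℝ V^H − dim_ℝ V^G). -/
open scoped Classical

noncomputable instance subgroupFintype {G : Type*} [Group G] [Finite G] :
    Fintype (Subgroup G) :=
  haveI : Finite (Subgroup G) :=
    Finite.of_injective (fun H => (H : Set G)) fun _ _ h => SetLike.coe_injective h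
  Fintype.ofFinite _

noncomputable def fixedSubmodule {k G V : Type*} [CommSemiring k] [Group G] [AddCommMonoid V]
    [Module k V] (ρ : Representation k G V) (H : Subgroup G) : Submodule k V :=
  { carrier := {v | ∀ g : H, (ρ.comp H.subtype) g v = v}
    zero_mem' := fun g => map_zero _
    add_mem' := fun hv hw g => (map_add _ _ _).trans (congrArg₂ (· + ·) (hv g) (hw g))
    smul_mem' := fun r v hv g => (LinearMap.map_smul _ r v).trans (congrArg (r • ·) (hv g)) }

/-!
An involution `A` of a finite-dimensional space splits it, away from characteristic two, into
its `±1`-eigenspaces, so `det A = (-1) ^ (dim V - dim V^A)`. In a Klein four-group the order-two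
subgroups are the `⟨x⟩` with `x ≠ 1`, and for `g ≠ 1` the two of them not containing `g` are
`⟨a⟩` and `⟨b⟩` with `a * b = g`. Hence `det ρ(g) = det ρ(a) * det ρ(b)` is `-1` to the power
`dim V^a + dim V^b`, which has the parity of
`(dim V^a - dim V^G) + (dim V^b - dim V^G)` because `V^G` lies in both `V^a` and `V^b`.
-/

namespace LinearMap

section Involution

variable {R M : Type*} [Ring R] [Invertible (2 : R)] [AddCommGroup M] [Module R M]

theorem isCompl_ker_sub_one_ker_add_one {A : Module.End R M} (hA : A * A = 1) :
    IsCompl (ker (A - 1)) (ker (A + 1)) := by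
  have hAA (v : M) : A (A v) = v := congr($hA v)
  constructor
  · rw [Submodule.disjoint_def]
    intro v hv hv'
    simp only [mem_ker, sub_apply, add_apply, Module.End.one_apply, sub_eq_zero] at hv hv'
    have h2 : (2 : R) • v = 0 := by rw [two_smul]; nth_rw 1 [← hv]; exact hv'
    simpa using congr((⅟2 : R) • $h2)
  · rw [Submodule.codisjoint_iff_exists_add_eq]
    intro v
    refine ⟨(⅟2 : R) • (v + A v), (⅟2 : R) • (v - A v), ?_, ?_, ?_⟩
    · simp [hAA, add_comm]
    · simp [hAA, smul_sub]
    · rw [← smul_add, add_add_sub_cancel, ← two_smul R v, smul_smul, invOf_mul_self, one_smul]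

end Involution

section Det

variable {K V : Type*} [Field K] [AddCommGroup V] [Module K V] [FiniteDimensional K V]

theorem det_eq_neg_one_pow_finrank_of_isCompl {A : Module.End K V} {p q : Submodule K V}
    (h : IsCompl p q) (hp : ∀ v ∈ p, A v = v) (hq : ∀ v ∈ q, A v = -v) :
    LinearMap.det A = (-1) ^ Module.finrank K q := by
  let e := Submodule.prodEquivOfIsCompl p q h
  have hconj : (e.symm : V →ₗ[K] p × q) ∘ₗ A ∘ₗ e = prodMap id (-id) := by
    ext x <;> simp [e, hp, hq]
  rw [← LinearMap.det_conj A e.symm, LinearEquiv.symm_symm, hconj, det_prodMap, det_id, one_mul,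
    ← neg_one_smul K id, det_smul, det_id, mul_one]

variable [Invertible (2 : K)]

theorem det_eq_neg_one_pow_of_mul_self_eq_one {A : Module.End K V} (hA : A * A = 1) :
    LinearMap.det A = (-1) ^ (Module.finrank K V - Module.finrank K (ker (A - 1))) := by
  have h := isCompl_ker_sub_one_ker_add_one hA
  rw [det_eq_neg_one_pow_finrank_of_isCompl h, ← Submodule.finrank_add_eq_of_isCompl h,
    Nat.add_sub_cancel_left]
  · simp [sub_eq_zero]
  · simp [add_eq_zero_iff_eq_neg]

theorem det_mul_eq_neg_one_pow_mul_neg_one_pow {A B : Module.End K V} (hA : A * A = 1)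
    (hB : B * B = 1) {U : Submodule K V} (hUA : U ≤ ker (A - 1)) (hUB : U ≤ ker (B - 1)) :
    LinearMap.det (A * B) =
      (-1) ^ (Module.finrank K (ker (A - 1)) - Module.finrank K U) *
        (-1) ^ (Module.finrank K (ker (B - 1)) - Module.finrank K U) := by
  have := Submodule.finrank_mono hUA
  have := Submodule.finrank_mono hUB
  have := Submodule.finrank_le (ker (A - 1))
  have := Submodule.finrank_le (ker (B - 1))
  rw [map_mul, det_eq_neg_one_pow_of_mul_self_eq_one hA, det_eq_neg_one_pow_of_mul_self_eq_one hB,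
    ← pow_add, ← pow_add]
  exact neg_one_pow_congr (by simp only [Nat.even_iff]; omega)

end Det

end LinearMap

section FixedSubmodule

variable {k G V : Type*} [Group G]

theorem mem_fixedSubmodule [CommSemiring k] [AddCommMonoid V] [Module k V]
    {ρ : Representation k G V} {H : Subgroup G} {v : V} :
    v ∈ fixedSubmodule ρ H ↔ ∀ h ∈ H, ρ h v = v :=
  Subtype.forall

theorem fixedSubmodule_anti [CommSemiring k] [AddCommMonoid V] [Module k V]
    (ρ : Representation k G V) : Antitone (fixedSubmodule ρ) :=
  fun _ _ hle _ hv => mem_fixedSubmodule.2 fun h hh => mem_fixedSubmodule.1 hv h (hle hh)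

theorem mem_fixedSubmodule_closure_iff [CommSemiring k] [AddCommMonoid V] [Module k V]
    {ρ : Representation k G V} {s : Set G} {v : V} :
    v ∈ fixedSubmodule ρ (Subgroup.closure s) ↔ ∀ g ∈ s, ρ g v = v := by
  rw [mem_fixedSubmodule]
  refine ⟨fun hv g hg => hv g (Subgroup.subset_closure hg), fun hv h hh => ?_⟩
  induction hh using Subgroup.closure_induction with
  | mem g hg => exact hv g hg
  | one => simp
  | mul g g' _ _ hg hg' => simp [Module.End.mul_apply, hg, hg']
  | inv g _ hg => exact (congrArg (ρ g⁻¹) hg).symm.trans (ρ.inv_self_apply g v)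

theorem fixedSubmodule_zpowers [CommRing k] [AddCommGroup V] [Module k V]
    (ρ : Representation k G V) (x : G) :
    fixedSubmodule ρ (Subgroup.zpowers x) = LinearMap.ker (ρ x - 1) := by
  ext v
  simp [Subgroup.zpowers_eq_closure, mem_fixedSubmodule_closure_iff, sub_eq_zero]

end FixedSubmodule

section Involutions

variable {G : Type*} [Group G]

theorem Subgroup.mem_zpowers_iff_of_orderOf_eq_two {x y : G} (hx : orderOf x = 2) :
    y ∈ zpowers x ↔ y = 1 ∨ y = x := by
  have hfin : IsOfFinOrder x := orderOf_pos_iff.1 (by omega)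
  simp [hfin.mem_zpowers_iff_mem_range_orderOf, hx, Nat.le_one_iff_eq_zero_or_eq_one, or_and_right,
    exists_or, eq_comm]

theorem Subgroup.card_eq_prime_iff {p : ℕ} [Fact p.Prime] {H : Subgroup G} :
    Nat.card H = p ↔ ∃ x, orderOf x = p ∧ zpowers x = H := by
  refine ⟨fun h => ?_, fun ⟨x, hx, hH⟩ => hH ▸ (Nat.card_zpowers x).trans hx⟩
  obtain ⟨x, hx⟩ := H.isCyclic_iff_exists_zpowers_eq_top.1 (isCyclic_of_prime_card h)
  exact ⟨x, (Nat.card_zpowers x).symm.trans (hx ▸ h), hx⟩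

theorem Finset.prod_subgroups_card_eq_two {M : Type*} [CommMonoid M] [Fintype G]
    (P : Subgroup G → Prop) [DecidablePred P] (f : Subgroup G → M) :
    ∏ H ∈ univ.filter (fun H : Subgroup G => Nat.card H = 2 ∧ P H), f H =
      ∏ x ∈ univ.filter (fun x : G => orderOf x = 2 ∧ P (Subgroup.zpowers x)),
        f (Subgroup.zpowers x) := by
  symm
  refine prod_nbij Subgroup.zpowers ?_ ?_ ?_ fun _ _ => rfl
  · intro x hx
    simp only [mem_filter, mem_univ, true_and] at hx ⊢
    exact ⟨(Nat.card_zpowers x).trans hx.1, hx.2⟩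
  · intro x hx y hy hxy
    simp only [coe_filter, mem_univ, true_and, Set.mem_ofPred] at hx hy
    have hxy' : x ∈ Subgroup.zpowers y := hxy ▸ Subgroup.mem_zpowers x
    rw [Subgroup.mem_zpowers_iff_of_orderOf_eq_two hy.1] at hxy'
    exact hxy'.resolve_left fun h => by simp [h] at hx
  · intro H hH
    simp only [coe_filter, mem_univ, true_and, Set.mem_ofPred] at hH
    obtain ⟨x, hx, rfl⟩ := Subgroup.card_eq_prime_iff.1 hH.1
    exact ⟨x, by simpa using ⟨hx, hH.2⟩, rfl⟩

end Involutions

namespace IsKleinFour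

variable {G : Type*} [Group G] [IsKleinFour G]

theorem exists_filter_ne_one_ne_eq_pair [Fintype G] {g : G} (hg : g ≠ 1) :
    ∃ a b : G, a * b = g ∧ a ≠ b ∧
      Finset.univ.filter (fun x => x ≠ 1 ∧ x ≠ g) = {a, b} := by
  obtain ⟨a, -, ha⟩ : ∃ a ∈ Finset.univ, a ∉ ({1, g} : Finset G) :=
    Finset.exists_mem_notMem_of_card_lt_card
      ((Finset.card_le_two).trans_lt (by simp))
  simp only [Finset.mem_insert, Finset.mem_singleton, not_or] at ha
  have hag : a * (a * g) = g := by rw [← mul_assoc, mul_self, one_mul]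
  refine ⟨a, a * g, hag, fun h => hg (by simpa using h), ?_⟩
  ext x
  simp only [Finset.mem_filter, Finset.mem_univ, true_and, Finset.mem_insert,
    Finset.mem_singleton]
  constructor
  · rintro ⟨hx1, hxg⟩
    by_cases hxa : x = a
    · exact .inl hxa
    · exact .inr (eq_mul_of_ne_all ha.1 hg ha.2 hx1 hxa hxg)
  · rintro (rfl | rfl)
    · exact ha
    · refine ⟨fun h => ha.2 ?_, fun h => ha.1 (by simpa using h)⟩
      rwa [mul_eq_one_iff_eq_inv, inv_eq_self] at h

end IsKleinFour

theorem det_eq_prod_of_isKleinFour {K G V : Type*} [Field K] [Invertible (2 : K)] [Group G]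
    [Fintype G] [IsKleinFour G] [AddCommGroup V] [Module K V] [FiniteDimensional K V]
    (ρ : Representation K G V) (g : G) :
    LinearMap.det (ρ g) =
      ∏ H ∈ Finset.univ.filter (fun H : Subgroup G => Nat.card H = 2 ∧ g ∉ H),
        (-1 : K) ^ (Module.finrank K (fixedSubmodule ρ H)
          - Module.finrank K (fixedSubmodule ρ ⊤)) := by
  rw [Finset.prod_subgroups_card_eq_two (fun H => g ∉ H)]
  rcases eq_or_ne g 1 with rfl | hg
  · simp
  have horder (x : G) : orderOf x = 2 ↔ x ≠ 1 := orderOf_eq_two_iff IsKleinFour.exponent_two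
  have hinvolutions : Finset.univ.filter (fun x => orderOf x = 2 ∧ g ∉ Subgroup.zpowers x) =
      Finset.univ.filter (fun x => x ≠ 1 ∧ x ≠ g) := by
    refine Finset.filter_congr fun x _ => ?_
    rw [horder]
    refine and_congr_right fun hx => ?_
    rw [Subgroup.mem_zpowers_iff_of_orderOf_eq_two ((horder x).2 hx), or_iff_right hg, ne_comm]
  obtain ⟨a, b, rfl, hab, hpair⟩ := IsKleinFour.exists_filter_ne_one_ne_eq_pair hg
  have hρ (x : G) : ρ x * ρ x = 1 := by rw [← map_mul, IsKleinFour.mul_self, map_one]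
  have htop (x : G) : fixedSubmodule ρ ⊤ ≤ LinearMap.ker (ρ x - 1) :=
    fixedSubmodule_zpowers ρ x ▸ fixedSubmodule_anti ρ le_top
  rw [hinvolutions, hpair, Finset.prod_pair hab, fixedSubmodule_zpowers, fixedSubmodule_zpowers,
    map_mul]
  exact LinearMap.det_mul_eq_neg_one_pow_mul_neg_one_pow (hρ a) (hρ b) (htop a) (htop b)

/-- For a real representation of `C₂ × C₂`, the determinant of `ρ(g)` equals the
product over the order-2 subgroups `H` not containing `g` of
`(−1)^(dim V^H − dim V^G)`. -/
theorem det_eq_orientation_behaviour_C2C2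
    (V : Type) [AddCommGroup V] [Module ℝ V] [FiniteDimensional ℝ V]
    (ρ : Representation ℝ (Multiplicative (ZMod 2 × ZMod 2)) V)
    (g : Multiplicative (ZMod 2 × ZMod 2)) :
    LinearMap.det (ρ g) =
      ∏ H ∈ Finset.univ.filter
        (fun H : Subgroup (Multiplicative (ZMod 2 × ZMod 2)) =>
          Nat.card H = 2 ∧ g ∉ H),
        (-1 : ℝ) ^ (Module.finrank ℝ (fixedSubmodule ρ H)
          - Module.finrank ℝ (fixedSubmodule ρ ⊤)) :=
  det_eq_prod_of_isKleinFour ρ g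
end

section
/- Consider the subgroup L of ℤ⁹ (with coordinates d₀, …, d₈) consisting of all integer vectors satisfying: (1) d₃ ≡ d₇ (mod 2); (2) d₀ − 3d₁ + 2d₃ = 0; (3) d₁ + d₂ ≡ 0 (mod 2); (4) d₁ + d₄ ≡ 0 (mod 2); (5) d₀ − 2d₁ − d₂ + 2d₅ ≡ 0 (mod 4); (6) d₀ − 2d₁ − d₄ + 2d₆ ≡ 0 (mod 4). Then L is exactly the ℤ-span of the eight vectors (1,1,1,1,1,1,1,1,1), (4,2,2,1,0,1,0,1,0), (5,3,1,2,1,1,1,0,0), (3,1,1,0,1,0,0,0,0), (0,0,2,0,0,1,0,0,0), (8,4,0,2,0,0,0,0,0), (0,0,4,0,0,0,0,0,0), (12,4,0,0,0,0,0,0,0). -/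
/-- The subgroup of `ℤ⁹` of realizable dimension functions for `A₅` (cut out by the
listed congruences) is exactly the span of the eight listed vectors. -/
theorem A5_dimension_functions (v : Fin 9 → ℤ) :
    ((2 : ℤ) ∣ (v 3 - v 7) ∧
     v 0 - 3 * v 1 + 2 * v 3 = 0 ∧
     (2 : ℤ) ∣ (v 1 + v 2) ∧
     (2 : ℤ) ∣ (v 1 + v 4) ∧
     (4 : ℤ) ∣ (v 0 - 2 * v 1 - v 2 + 2 * v 5) ∧
     (4 : ℤ) ∣ (v 0 - 2 * v 1 - v 4 + 2 * v 6)) ↔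
      v ∈ Submodule.span ℤ
        ({![1, 1, 1, 1, 1, 1, 1, 1, 1],
          ![4, 2, 2, 1, 0, 1, 0, 1, 0],
          ![5, 3, 1, 2, 1, 1, 1, 0, 0],
          ![3, 1, 1, 0, 1, 0, 0, 0, 0],
          ![0, 0, 2, 0, 0, 1, 0, 0, 0],
          ![8, 4, 0, 2, 0, 0, 0, 0, 0],
          ![0, 0, 4, 0, 0, 0, 0, 0, 0],
          ![12, 4, 0, 0, 0, 0, 0, 0, 0]} : Set (Fin 9 → ℤ)) := by
  constructor
  · rintro ⟨⟨c, hc⟩, h0, ⟨a, ha⟩, ⟨b, hb⟩, ⟨d, hd⟩, ⟨e, he⟩⟩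
    set S : Set (Fin 9 → ℤ) :=
        ({![1, 1, 1, 1, 1, 1, 1, 1, 1],
          ![4, 2, 2, 1, 0, 1, 0, 1, 0],
          ![5, 3, 1, 2, 1, 1, 1, 0, 0],
          ![3, 1, 1, 0, 1, 0, 0, 0, 0],
          ![0, 0, 2, 0, 0, 1, 0, 0, 0],
          ![8, 4, 0, 2, 0, 0, 0, 0, 0],
          ![0, 0, 4, 0, 0, 0, 0, 0, 0],
          ![12, 4, 0, 0, 0, 0, 0, 0, 0]} : Set (Fin 9 → ℤ)) with hS
    have heta : v = ![v 0, v 1, v 2, v 3, v 4, v 5, v 6, v 7, v 8] := by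
      funext i; fin_cases i <;> rfl
    have hv : ![v 0, v 1, v 2, v 3, v 4, v 5, v 6, v 7, v 8] = (v 8) • ![1, 1, 1, 1, 1, 1, 1, 1, 1]
        + (v 7 - v 8) • ![4, 2, 2, 1, 0, 1, 0, 1, 0]
        + (-v 1 + v 7 - v 8 + b + 2*c + 2*e) • ![5, 3, 1, 2, 1, 1, 1, 0, 0]
        + (-v 7 + b - 2*c - 2*e) • ![3, 1, 1, 0, 1, 0, 0, 0, 0]
        + (-v 7 + v 8 + a - b + 2*d - 2*e) • ![0, 0, 2, 0, 0, 1, 0, 0, 0]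
        + (v 1 - v 7 + v 8 - b - c - 2*e) • ![8, 4, 0, 2, 0, 0, 0, 0, 0]
        + (-d + e) • ![0, 0, 4, 0, 0, 0, 0, 0, 0]
        + e • ![12, 4, 0, 0, 0, 0, 0, 0, 0] := by
      funext i
      fin_cases i <;>
        simp only [Pi.add_apply, Pi.smul_apply, smul_eq_mul, Matrix.cons_val_zero',
          Matrix.cons_val_succ'] <;>
        linarith [hc, h0, ha, hb, hd, he]
    rw [heta, hv]
    have mem : ∀ w ∈ S, w ∈ Submodule.span ℤ S := fun w hw => Submodule.subset_span hw
    refine Submodule.add_mem _ (Submodule.add_mem _ (Submodule.add_mem _ (Submodule.add_mem _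
      (Submodule.add_mem _ (Submodule.add_mem _ (Submodule.add_mem _ ?_ ?_) ?_) ?_) ?_) ?_) ?_) ?_
        <;> refine Submodule.smul_mem _ _ (mem _ ?_) <;> simp [hS]
  · intro h
    refine Submodule.span_induction ?_ ?_ ?_ ?_ h
    · intro x hx
      simp only [Set.mem_insert_iff, Set.mem_singleton_iff] at hx
      rcases hx with rfl|rfl|rfl|rfl|rfl|rfl|rfl|rfl <;>
        refine ⟨?_, ?_, ?_, ?_, ?_, ?_⟩ <;>
        simp only [show ((0:Fin 9)) = ⟨0, by omega⟩ from rfl,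
          show ((1:Fin 9)) = ⟨1, by omega⟩ from rfl,
          show ((2:Fin 9)) = ⟨2, by omega⟩ from rfl,
          show ((3:Fin 9)) = ⟨3, by omega⟩ from rfl,
          show ((4:Fin 9)) = ⟨4, by omega⟩ from rfl,
          show ((5:Fin 9)) = ⟨5, by omega⟩ from rfl,
          show ((6:Fin 9)) = ⟨6, by omega⟩ from rfl,
          show ((7:Fin 9)) = ⟨7, by omega⟩ from rfl,
          Matrix.cons_val_zero', Matrix.cons_val_succ'] <;> norm_num
    · exact ⟨⟨0, by norm_num⟩, by norm_num, ⟨0, by norm_num⟩, ⟨0, by norm_num⟩,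
        ⟨0, by norm_num⟩, ⟨0, by norm_num⟩⟩
    · rintro x y _ _ ⟨⟨c1,h1⟩,h2,⟨a1,h3⟩,⟨b1,h4⟩,⟨d1,h5⟩,⟨e1,h6⟩⟩
        ⟨⟨c2,g1⟩,g2,⟨a2,g3⟩,⟨b2,g4⟩,⟨d2,g5⟩,⟨e2,g6⟩⟩
      exact ⟨⟨c1+c2, by simp only [Pi.add_apply]; linarith⟩,
        by simp only [Pi.add_apply]; linarith,
        ⟨a1+a2, by simp only [Pi.add_apply]; linarith⟩,
        ⟨b1+b2, by simp only [Pi.add_apply]; linarith⟩,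
        ⟨d1+d2, by simp only [Pi.add_apply]; linarith⟩,
        ⟨e1+e2, by simp only [Pi.add_apply]; linarith⟩⟩
    · rintro r x _ ⟨⟨c1,h1⟩,h2,⟨a1,h3⟩,⟨b1,h4⟩,⟨d1,h5⟩,⟨e1,h6⟩⟩
      refine ⟨⟨r*c1, ?_⟩, ?_, ⟨r*a1, ?_⟩, ⟨r*b1, ?_⟩, ⟨r*d1, ?_⟩, ⟨r*e1, ?_⟩⟩ <;>
        simp only [Pi.smul_apply, smul_eq_mul]
      · linear_combination r * h1
      · linear_combination r * h2
      · linear_combination r * h3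
      · linear_combination r * h4
      · linear_combination r * h5
      · linear_combination r * h6
end
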